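/- In the greedy construction of the +(6+ε)W spanner (pairs sorted first by W_{u,v} then by d_G(u,v), path P_{u,v} added whenever d_H(u,v) > d_G(u,v) + (6+ε)W_{u,v}, starting from an n^{1/3}-light initialization), if the path P_{u,v} is added to the current spanner H₀, then the first and last edges of P_{u,v} are both missing from H₀. -/

import Mathlib

open Finset SimpleGraph
open scoped Classical

namespace AddSpanner

/-- Total weight of a walk. -/
noncomputable def walkWeight {V : Type} (w : V → V → ℝ) {G : SimpleGraph V} :
    ∀ {u v : V}, G.Walk u v → ℝ
  | _, _, .nil => 0
  | u, _, .cons (v := x) _ q => w u x + walkWeight w q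

/-- Maximum edge weight along a walk (0 for the trivial walk). -/
noncomputable def walkMaxW {V : Type} (w : V → V → ℝ) {G : SimpleGraph V} {u v : V}
    (p : G.Walk u v) : ℝ :=
  (p.darts.map fun d => w d.toProd.1 d.toProd.2).foldr max 0

/-- Weighted shortest-path distance (infimum over all walk weights). -/
noncomputable def wdist {V : Type} (G : SimpleGraph V) (w : V → V → ℝ) (u v : V) : ℝ :=
  sInf {x | ∃ p : G.Walk u v, walkWeight w p = x}

/-- A walk is a shortest path if it is a path whose weight realizes the distance. -/
def IsShortestPath {V : Type} (G : SimpleGraph V) (w : V → V → ℝ) {u v : V}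
    (p : G.Walk u v) : Prop :=
  p.IsPath ∧ walkWeight w p = wdist G w u v

/-- Number of `H`-neighbors of `x` reachable by an edge no heavier than the edge `{x,y}`. -/
noncomputable def lightDeg {V : Type} [Fintype V] (H : SimpleGraph V) (w : V → V → ℝ)
    (x y : V) : ℕ :=
  (Finset.univ.filter fun z => H.Adj x z ∧ w x z ≤ w x y).card

/-- `H` is a `t`-light initialization of `G`: it is a subgraph which, for every vertex,
contains its `t` lightest incident edges (all of them if the degree is at most `t`);
equivalently, whenever an edge `{x,y}` of `G` is missing from `H`, vertex `x` already has at
least `t` incident `H`-edges of weight at most `w x y`. -/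
def LightInit {V : Type} [Fintype V] (G H : SimpleGraph V) (w : V → V → ℝ) (t : ℝ) : Prop :=
  H ≤ G ∧ ∀ x y, G.Adj x y → ¬ H.Adj x y → t ≤ (lightDeg H w x y : ℝ)

/-- Number of edges of a graph. -/
noncomputable def numEdges {V : Type} (H : SimpleGraph V) : ℕ :=
  Nat.card H.edgeSet

end AddSpanner


/-!
If the first edge `ux` of `P_{u,v}` were already in `H₀`, the suffix of `P_{u,v}` from `x` is a
shortest path with no larger maximum edge weight and strictly smaller length, so its pair was
processed earlier and `d_{H₀}(x,v) ≤ d_G(x,v) + (6+ε)W_{x,v}`. Prepending `ux` then gives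
`d_{H₀}(u,v) ≤ d_G(u,v) + (6+ε)W_{u,v}`, and `P_{u,v}` would not have been added.
The last edge is the first edge of the reversed path.
-/

namespace AddSpanner

variable {V : Type} {G H : SimpleGraph V} {w : V → V → ℝ}

@[simp]
lemma walkWeight_cons {u x v : V} (h : G.Adj u x) (q : G.Walk x v) :
    walkWeight w (Walk.cons h q) = w u x + walkWeight w q := rfl

@[simp]
lemma walkMaxW_cons {u x v : V} (h : G.Adj u x) (q : G.Walk x v) :
    walkMaxW w (Walk.cons h q) = max (w u x) (walkMaxW w q) := rfl

lemma walkWeight_eq_sum_darts {u v : V} (p : G.Walk u v) :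
    walkWeight w p = (p.darts.map fun d => w d.toProd.1 d.toProd.2).sum := by
  induction p with
  | nil => rfl
  | cons h q ih => simp [ih]

lemma map_darts_reverse (hsymm : ∀ x y, w x y = w y x) {u v : V} (p : G.Walk u v) :
    p.reverse.darts.map (fun d => w d.toProd.1 d.toProd.2) =
      (p.darts.map fun d => w d.toProd.1 d.toProd.2).reverse := by
  simp [Walk.darts_reverse, Function.comp_def, hsymm]

lemma walkWeight_reverse (hsymm : ∀ x y, w x y = w y x) {u v : V} (p : G.Walk u v) :
    walkWeight w p.reverse = walkWeight w p := by
  rw [walkWeight_eq_sum_darts, walkWeight_eq_sum_darts, map_darts_reverse hsymm, List.sum_reverse]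

lemma walkMaxW_reverse (hsymm : ∀ x y, w x y = w y x) {u v : V} (p : G.Walk u v) :
    walkMaxW w p.reverse = walkMaxW w p := by
  have : LeftCommutative (max : ℝ → ℝ → ℝ) := ⟨max_left_comm⟩
  rw [walkMaxW, walkMaxW, map_darts_reverse hsymm]
  exact (List.reverse_perm _).foldr_eq 0

lemma walkWeight_nonneg (hw : ∀ x y, G.Adj x y → 0 ≤ w x y) {u v : V} (p : G.Walk u v) :
    0 ≤ walkWeight w p := by
  induction p with
  | nil => exact le_rfl
  | cons h q ih => exact add_nonneg (hw _ _ h) ih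

lemma wdist_le_walkWeight (hw : ∀ x y, G.Adj x y → 0 ≤ w x y) {u v : V} (p : G.Walk u v) :
    wdist G w u v ≤ walkWeight w p :=
  csInf_le ⟨0, by rintro _ ⟨q, rfl⟩; exact walkWeight_nonneg hw q⟩ ⟨p, rfl⟩

lemma le_wdist {u v : V} {c : ℝ} (hr : G.Reachable u v)
    (hc : ∀ p : G.Walk u v, c ≤ walkWeight w p) : c ≤ wdist G w u v :=
  le_csInf ⟨_, hr.some, rfl⟩ (by rintro _ ⟨p, rfl⟩; exact hc p)

lemma wdist_of_not_reachable {u v : V} (hr : ¬ G.Reachable u v) : wdist G w u v = 0 := by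
  have : {x | ∃ p : G.Walk u v, walkWeight w p = x} = ∅ :=
    Set.eq_empty_of_forall_notMem fun _ ⟨p, _⟩ => hr ⟨p⟩
  rw [wdist, this, Real.sInf_empty]

lemma wdist_symm (hsymm : ∀ x y, w x y = w y x) (G : SimpleGraph V) (u v : V) :
    wdist G w u v = wdist G w v u := by
  have : {x | ∃ p : G.Walk u v, walkWeight w p = x} =
      {x | ∃ p : G.Walk v u, walkWeight w p = x} := by
    ext
    constructor <;> rintro ⟨p, rfl⟩ <;> exact ⟨p.reverse, walkWeight_reverse hsymm p⟩
  rw [wdist, wdist, this]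

/-- The triangle inequality across one edge; it also holds when `x` and `v` lie in different
components, since `wdist` is then `0` on both sides. -/
lemma wdist_le_add_wdist_of_adj (hw : ∀ x y, H.Adj x y → 0 ≤ w x y) {u x : V} (h : H.Adj u x)
    (v : V) : wdist H w u v ≤ w u x + wdist H w x v := by
  by_cases hr : H.Reachable x v
  · have : wdist H w u v - w u x ≤ wdist H w x v := le_wdist hr fun q => by
      have := wdist_le_walkWeight hw (Walk.cons h q)
      rw [walkWeight_cons] at this
      linarith
    linarith
  · have hr' : ¬ H.Reachable u v := fun huv => hr (h.reachable.symm.trans huv)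
    rw [wdist_of_not_reachable hr, wdist_of_not_reachable hr']
    simpa using hw u x h

lemma IsShortestPath.reverse (hsymm : ∀ x y, w x y = w y x) {u v : V} {p : G.Walk u v}
    (hp : IsShortestPath G w p) : IsShortestPath G w p.reverse :=
  ⟨hp.1.reverse, by rw [walkWeight_reverse hsymm, hp.2, wdist_symm hsymm]⟩

lemma IsShortestPath.of_cons (hw : ∀ x y, G.Adj x y → 0 ≤ w x y) {u x v : V} {h : G.Adj u x}
    {q : G.Walk x v} (hp : IsShortestPath G w (Walk.cons h q)) : IsShortestPath G w q := by
  refine ⟨hp.1.of_cons, le_antisymm (le_wdist ⟨q⟩ fun r => ?_) (wdist_le_walkWeight hw q)⟩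
  have hpr := wdist_le_walkWeight hw (Walk.cons h r)
  rw [← hp.2, walkWeight_cons, walkWeight_cons] at hpr
  linarith

lemma IsShortestPath.wdist_cons (hw : ∀ x y, G.Adj x y → 0 ≤ w x y) {u x v : V}
    {h : G.Adj u x} {q : G.Walk x v} (hp : IsShortestPath G w (Walk.cons h q)) :
    wdist G w u v = w u x + wdist G w x v := by
  rw [← hp.2, walkWeight_cons, (hp.of_cons hw).2]

/-- The greedy algorithm processes the pairs `(u, v)` in increasing lexicographic order of
`(W_{u,v}, d_G(u,v))`. -/
noncomputable def pairKey (w : V → V → ℝ) {u v : V} (p : G.Walk u v) : ℝ ×ₗ ℝ :=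
  toLex (walkMaxW w p, wdist G w u v)

lemma pairKey_reverse (hsymm : ∀ x y, w x y = w y x) {u v : V} (p : G.Walk u v) :
    pairKey w p.reverse = pairKey w p := by
  rw [pairKey, pairKey, walkMaxW_reverse hsymm, wdist_symm hsymm G v u]

lemma IsShortestPath.pairKey_lt_of_cons (hw : ∀ x y, G.Adj x y → 0 < w x y) {u x v : V}
    {h : G.Adj u x} {q : G.Walk x v} (hp : IsShortestPath G w (Walk.cons h q)) :
    pairKey w q < pairKey w (Walk.cons h q) := by
  have hdist := hp.wdist_cons fun a b hab => (hw a b hab).le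
  refine Prod.Lex.toLex_lt_toLex'.2 ⟨le_max_right _ _, fun _ => ?_⟩
  linarith [hw u x h]

lemma IsShortestPath.wdist_le_of_cons (hwG : ∀ x y, G.Adj x y → 0 ≤ w x y)
    (hwH : ∀ x y, H.Adj x y → 0 ≤ w x y) {c : ℝ} (hc : 0 ≤ c) {u x v : V} {h : G.Adj u x}
    {q : G.Walk x v} (hp : IsShortestPath G w (Walk.cons h q)) (hux : H.Adj u x)
    (hq : wdist H w x v ≤ wdist G w x v + c * walkMaxW w q) :
    wdist H w u v ≤ wdist G w u v + c * walkMaxW w (Walk.cons h q) := by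
  have hmax : c * walkMaxW w q ≤ c * walkMaxW w (Walk.cons h q) :=
    mul_le_mul_of_nonneg_left (le_max_right _ _) hc
  calc wdist H w u v ≤ w u x + wdist H w x v := wdist_le_add_wdist_of_adj hwH hux v
    _ ≤ w u x + wdist G w x v + c * walkMaxW w q := by linarith
    _ ≤ wdist G w u v + c * walkMaxW w (Walk.cons h q) := by rw [hp.wdist_cons hwG]; linarith

theorem IsShortestPath.first_edge_not_mem (hw : ∀ x y, G.Adj x y → 0 < w x y) {c : ℝ}
    (hc : 0 ≤ c) (hHG : H ≤ G) {u v : V} {p : G.Walk u v} (hp : IsShortestPath G w p)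
    (hadded : wdist G w u v + c * walkMaxW w p < wdist H w u v)
    (hearlier : ∀ x (q : G.Walk x v), IsShortestPath G w q → pairKey w q < pairKey w p →
      wdist H w x v ≤ wdist G w x v + c * walkMaxW w q) :
    s(u, p.snd) ∉ H.edgeSet := by
  have hwG : ∀ x y, G.Adj x y → 0 ≤ w x y := fun x y h => (hw x y h).le
  cases p with
  | nil => simp
  | cons h q =>
    intro hux
    rw [Walk.snd_cons, mem_edgeSet] at hux
    have hq := hearlier _ q (hp.of_cons hwG) (hp.pairKey_lt_of_cons hw)
    exact hadded.not_ge <| hp.wdist_le_of_cons hwG (fun x y h => hwG x y (hHG h)) hc hux hq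

end AddSpanner

open AddSpanner in
theorem greedy_first_last_edge_missing_general
    (V : Type) (G : SimpleGraph V) (w : V → V → ℝ)
    (hw : ∀ x y, G.Adj x y → 0 < w x y) (hsymm : ∀ x y, w x y = w y x)
    (ε : ℝ) (hε : 0 < ε)
    (H₀ : SimpleGraph V)
    (hH₀ : H₀ ≤ G)
    (u v : V) (p : G.Walk u v) (hp : IsShortestPath G w p)
    -- `P_{u,v}` is about to be added:
    (hadded : wdist H₀ w u v > wdist G w u v + (6 + ε) * walkMaxW w p)
    -- every pair processed earlier already has small stretch in `H₀`:
    (hinv : ∀ (x y : V) (q : G.Walk x y), IsShortestPath G w q →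
      (walkMaxW w q < walkMaxW w p ∨
        (walkMaxW w q = walkMaxW w p ∧ wdist G w x y < wdist G w u v)) →
      wdist H₀ w x y ≤ wdist G w x y + (6 + ε) * walkMaxW w q) :
    s(p.getVert 0, p.getVert 1) ∉ H₀.edgeSet ∧
      s(p.getVert (p.length - 1), p.getVert p.length) ∉ H₀.edgeSet := by
  have hc : 0 ≤ 6 + ε := by linarith
  have hfirst := hp.first_edge_not_mem hw hc hH₀ hadded fun x q hq hlt =>
    hinv x v q hq (Prod.Lex.toLex_lt_toLex.1 hlt)
  have hadded' : wdist G w v u + (6 + ε) * walkMaxW w p.reverse < wdist H₀ w v u := by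
    rwa [wdist_symm hsymm G v u, wdist_symm hsymm H₀ v u, walkMaxW_reverse hsymm]
  have hlast := (hp.reverse hsymm).first_edge_not_mem hw hc hH₀ hadded' fun x q hq hlt =>
    hinv x u q hq (Prod.Lex.toLex_lt_toLex.1 (hlt.trans_eq (pairKey_reverse hsymm p)))
  rw [Walk.snd_reverse, Sym2.eq_swap] at hlast
  rw [Walk.getVert_zero, Walk.getVert_length]
  exact ⟨hfirst, hlast⟩

open AddSpanner in
/-- in the greedy `+(6+ε)W` construction (pairs processed in nondecreasing order of
`W_{u,v}`, ties broken by `d_G`), when a shortest path `P_{u,v}` is added, its first and last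
edges are missing from the current spanner `H₀`. Here the algorithmic state is captured by the
invariant that every earlier pair already has stretch at most `+(6+ε)W` in `H₀`. -/
theorem greedy_first_last_edge_missing
    (V : Type) [Fintype V] [DecidableEq V] (n : ℕ) (hn : n = Fintype.card V)
    (G : SimpleGraph V) (w : V → V → ℝ)
    (hw : ∀ x y, G.Adj x y → 0 < w x y) (hsymm : ∀ x y, w x y = w y x)
    (ε : ℝ) (hε : 0 < ε)
    (HL H₀ : SimpleGraph V)
    (hlight : LightInit G HL w ((n : ℝ) ^ ((1 : ℝ) / 3)))
    (hLH : HL ≤ H₀) (hH₀ : H₀ ≤ G)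
    (u v : V) (huv : u ≠ v) (p : G.Walk u v) (hp : IsShortestPath G w p)
    -- `P_{u,v}` is about to be added:
    (hadded : wdist H₀ w u v > wdist G w u v + (6 + ε) * walkMaxW w p)
    -- every pair processed earlier already has small stretch in `H₀`:
    (hinv : ∀ (x y : V) (q : G.Walk x y), IsShortestPath G w q →
      (walkMaxW w q < walkMaxW w p ∨
        (walkMaxW w q = walkMaxW w p ∧ wdist G w x y < wdist G w u v)) →
      wdist H₀ w x y ≤ wdist G w x y + (6 + ε) * walkMaxW w q) :
    s(p.getVert 0, p.getVert 1) ∉ H₀.edgeSet ∧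
      s(p.getVert (p.length - 1), p.getVert p.length) ∉ H₀.edgeSet :=
  greedy_first_last_edge_missing_general V G w hw hsymm ε hε H₀ hH₀ u v p hp hadded hinv
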